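/- Define, for Hermitian X on a finite-dimensional complex Hilbert space H, the function N(X) = max{⟨T₀ - T₁, X⟩ : T₀, T₁ ⪰ 0, T₀ + T₁ ∈ K}, where K is a fixed nonempty compact convex set of positive semidefinite operators that contains (1/dim H)·I. Then N satisfies the triangle inequality, is absolutely homogeneous (N(aX) = |a|·N(X) for real a), and N(X) ≥ (1/dim H)·‖X‖₁; in particular N is a norm on Hermitian operators. -/

import Mathlib

/-!
A bias `Re Tr((T₀ - T₁) X)` is real-linear in `X`, and swapping `T₀` and `T₁` negates it, so the
set of biases is symmetric, scales with `X` and is subadditive in `X`; `N` is its supremum, which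
is finite since `K` is compact and `|Tr(T X)| ≤ Tr T · ∑ᵢⱼ |Xᵢⱼ|` for positive semidefinite `T`.
For the lower bound take `T₀`, `T₁` to be `1/n` times the spectral projections of `X` onto its
positive and nonpositive eigenspaces: then `T₀ + T₁ = (1/n) • 1 ∈ K` and `(T₀ - T₁) X = |X| / n`,
whose trace is `‖X‖₁ / n`.
-/

open Matrix ComplexOrder

/-- The positive semidefinite square root of a positive semidefinite matrix
(the definition of `Matrix.PosSemidef.sqrt` in the older Mathlib, since removed). -/
noncomputable def PosSemidef_sqrt {n : ℕ} {A : Matrix (Fin n) (Fin n) ℂ} (hA : A.PosSemidef) :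
    Matrix (Fin n) (Fin n) ℂ :=
  hA.1.eigenvectorUnitary.1 * diagonal ((↑) ∘ (√·) ∘ hA.1.eigenvalues) *
  (star hA.1.eigenvectorUnitary : Matrix (Fin n) (Fin n) ℂ)

/-- The trace norm of a matrix: the sum of its singular values, i.e. `Tr √(XᴴX)`. -/
noncomputable def traceNorm {n : ℕ} (X : Matrix (Fin n) (Fin n) ℂ) : ℝ :=
  ((PosSemidef_sqrt (Matrix.posSemidef_conjTranspose_mul_self X)).trace).re

namespace Matrix

lemma PosSemidef.norm_apply_sq_le {ι : Type*} {T : Matrix ι ι ℂ} (hT : T.PosSemidef) (i j : ι) :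
    ‖T i j‖ ^ 2 ≤ (T i i).re * (T j j).re := by
  classical
  have hdet := (Complex.nonneg_iff.mp ((hT.submatrix ![i, j]).det_nonneg)).1
  have hji : T j i = star (T i j) := by rw [← hT.1.apply i j, star_star]
  have hii := (Complex.nonneg_iff.mp (hT.diag_nonneg (i := i))).2
  have hjj := (Complex.nonneg_iff.mp (hT.diag_nonneg (i := j))).2
  rw [det_fin_two] at hdet
  simpa [hji, Complex.mul_re, ← hii, ← hjj, Complex.sq_norm, Complex.normSq_apply] using hdet

variable {ι : Type*} [Fintype ι]

lemma PosSemidef.re_apply_le_re_trace {T : Matrix ι ι ℂ} (hT : T.PosSemidef) (i : ι) :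
    (T i i).re ≤ T.trace.re := by
  rw [trace, Complex.re_sum]
  exact Finset.single_le_sum (f := fun k => (T k k).re)
    (fun k _ => (Complex.nonneg_iff.mp hT.diag_nonneg).1) (Finset.mem_univ i)

lemma PosSemidef.norm_apply_le_re_trace {T : Matrix ι ι ℂ} (hT : T.PosSemidef) (i j : ι) :
    ‖T i j‖ ≤ T.trace.re := by
  have hdiag (k : ι) : 0 ≤ (T k k).re := (Complex.nonneg_iff.mp hT.diag_nonneg).1
  have htr : 0 ≤ T.trace.re := (hdiag i).trans (hT.re_apply_le_re_trace i)
  refine le_of_sq_le_sq ?_ htr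
  calc ‖T i j‖ ^ 2 ≤ (T i i).re * (T j j).re := hT.norm_apply_sq_le i j
    _ ≤ T.trace.re * T.trace.re :=
      mul_le_mul (hT.re_apply_le_re_trace i) (hT.re_apply_le_re_trace j) (hdiag j) htr
    _ = T.trace.re ^ 2 := (sq _).symm

lemma PosSemidef.norm_trace_mul_le {T : Matrix ι ι ℂ} (hT : T.PosSemidef) (X : Matrix ι ι ℂ) :
    ‖(T * X).trace‖ ≤ T.trace.re * ∑ i, ∑ j, ‖X i j‖ := by
  calc ‖(T * X).trace‖ = ‖∑ i, ∑ j, T i j * X j i‖ := by simp only [trace, diag, mul_apply]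
    _ ≤ ∑ i, ∑ j, ‖T i j‖ * ‖X j i‖ := by
      refine (norm_sum_le _ _).trans (Finset.sum_le_sum fun i _ => ?_)
      exact (norm_sum_le _ _).trans_eq (by simp only [norm_mul])
    _ ≤ ∑ i, ∑ j, T.trace.re * ‖X j i‖ := by
      gcongr with i _ j _
      exact hT.norm_apply_le_re_trace i j
    _ = T.trace.re * ∑ i, ∑ j, ‖X i j‖ := by
      rw [Finset.sum_comm]; simp only [Finset.mul_sum]

variable [DecidableEq ι] {A : Matrix ι ι ℂ}

lemma IsHermitian.continuousOn_spectrum (hA : A.IsHermitian) (f : ℝ → ℝ) :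
    ContinuousOn f (spectrum ℝ A) :=
  (hA.spectrum_real_eq_range_eigenvalues ▸ Set.finite_range _).continuousOn f

lemma IsHermitian.trace_cfc (hA : A.IsHermitian) (f : ℝ → ℝ) :
    (cfc f A).trace = ∑ i, (f (hA.eigenvalues i) : ℂ) := by
  rw [hA.cfc_eq, IsHermitian.cfc, Unitary.conjStarAlgAut_apply, trace_mul_cycle,
    Unitary.coe_star_mul_self, one_mul, trace_diagonal]
  rfl

end Matrix

lemma PosSemidef_sqrt_eq_cfc {n : ℕ} {A : Matrix (Fin n) (Fin n) ℂ} (hA : A.PosSemidef) :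
    PosSemidef_sqrt hA = cfc Real.sqrt A := by
  rw [hA.1.cfc_eq]; rfl

lemma Matrix.IsHermitian.traceNorm_eq_sum_abs_eigenvalues {n : ℕ} {X : Matrix (Fin n) (Fin n) ℂ}
    (hX : X.IsHermitian) : traceNorm X = ∑ i, |hX.eigenvalues i| := by
  have hsq : Xᴴ * X = cfc (· ^ 2 : ℝ → ℝ) X := by
    rw [hX.eq, ← sq]; exact (cfc_pow_id X 2 hX).symm
  rw [traceNorm, PosSemidef_sqrt_eq_cfc, hsq, ← cfc_comp Real.sqrt (· ^ 2) X]
  simp only [Function.comp_def, Real.sqrt_sq_eq_abs, hX.trace_cfc, Complex.re_sum,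
    Complex.ofReal_re]

section StrategyNorm

open scoped Pointwise

variable {ι : Type*} [Fintype ι] (K : Set (Matrix ι ι ℂ))

def strategyBiases (X : Matrix ι ι ℂ) : Set ℝ :=
  {r | ∃ T₀ T₁ : Matrix ι ι ℂ, T₀.PosSemidef ∧ T₁.PosSemidef ∧ T₀ + T₁ ∈ K ∧
    r = (((T₀ - T₁) * X).trace).re}

noncomputable def strategyNorm (X : Matrix ι ι ℂ) : ℝ :=
  sSup (strategyBiases K X)

lemma neg_strategyBiases (X : Matrix ι ι ℂ) : -strategyBiases K X = strategyBiases K X := by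
  suffices h : ∀ Y, -strategyBiases K Y ⊆ strategyBiases K Y from
    (h X).antisymm (by simpa using Set.neg_subset_neg.mpr (h X))
  rintro Y r ⟨T₀, T₁, h₀, h₁, hK, hr⟩
  refine ⟨T₁, T₀, h₁, h₀, add_comm T₀ T₁ ▸ hK, ?_⟩
  rw [← neg_sub, neg_mul, trace_neg, Complex.neg_re, ← hr, neg_neg]

lemma strategyBiases_real_smul (a : ℝ) (X : Matrix ι ι ℂ) :
    strategyBiases K ((a : ℂ) • X) = a • strategyBiases K X := by
  have hsmul (T : Matrix ι ι ℂ) : ((T * ((a : ℂ) • X)).trace).re = a * ((T * X).trace).re := by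
    rw [Matrix.mul_smul, trace_smul, smul_eq_mul, Complex.re_ofReal_mul]
  ext r
  constructor
  · rintro ⟨T₀, T₁, h₀, h₁, hK, rfl⟩
    exact ⟨_, ⟨T₀, T₁, h₀, h₁, hK, rfl⟩, (hsmul _).symm⟩
  · rintro ⟨_, ⟨T₀, T₁, h₀, h₁, hK, rfl⟩, rfl⟩
    exact ⟨T₀, T₁, h₀, h₁, hK, (hsmul _).symm⟩

lemma strategyBiases_add_subset (X Y : Matrix ι ι ℂ) :
    strategyBiases K (X + Y) ⊆ strategyBiases K X + strategyBiases K Y := by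
  rintro _ ⟨T₀, T₁, h₀, h₁, hK, rfl⟩
  refine ⟨_, ⟨T₀, T₁, h₀, h₁, hK, rfl⟩, _, ⟨T₀, T₁, h₀, h₁, hK, rfl⟩, ?_⟩
  rw [mul_add, trace_add, Complex.add_re]

lemma strategyBiases_nonempty {T : Matrix ι ι ℂ} (hT : T.PosSemidef) (hTK : T ∈ K)
    (X : Matrix ι ι ℂ) : (strategyBiases K X).Nonempty :=
  ⟨_, T, 0, hT, .zero, by rwa [add_zero], rfl⟩

lemma bddAbove_strategyBiases (hK : IsCompact K) (X : Matrix ι ι ℂ) :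
    BddAbove (strategyBiases K X) := by
  obtain ⟨M, hM⟩ := hK.bddAbove_image (f := fun T : Matrix ι ι ℂ => T.trace.re)
    (by fun_prop : Continuous fun T : Matrix ι ι ℂ => T.trace.re).continuousOn
  set C := ∑ i, ∑ j, ‖X i j‖
  refine ⟨M * C, ?_⟩
  rintro _ ⟨T₀, T₁, h₀, h₁, hTK, rfl⟩
  calc (((T₀ - T₁) * X).trace).re = ((T₀ * X).trace).re - ((T₁ * X).trace).re := by
        rw [sub_mul, trace_sub, Complex.sub_re]
    _ ≤ ‖(T₀ * X).trace‖ + ‖(T₁ * X).trace‖ := by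
        linarith [Complex.re_le_norm (T₀ * X).trace, neg_abs_le (T₁ * X).trace.re,
          Complex.abs_re_le_norm (T₁ * X).trace]
    _ ≤ T₀.trace.re * C + T₁.trace.re * C :=
        add_le_add (h₀.norm_trace_mul_le X) (h₁.norm_trace_mul_le X)
    _ = (T₀ + T₁).trace.re * C := by rw [trace_add, Complex.add_re, add_mul]
    _ ≤ M * C := mul_le_mul_of_nonneg_right (hM ⟨_, hTK, rfl⟩) (by positivity)

lemma strategyNorm_real_smul (a : ℝ) (X : Matrix ι ι ℂ) :
    strategyNorm K ((a : ℂ) • X) = |a| * strategyNorm K X := by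
  have h : a • strategyBiases K X = |a| • strategyBiases K X := by
    rcases le_or_gt 0 a with ha | ha
    · rw [abs_of_nonneg ha]
    · rw [abs_of_neg ha, Set.neg_smul_set, ← Set.smul_set_neg, neg_strategyBiases]
  rw [strategyNorm, strategyBiases_real_smul, h, Real.sSup_smul_of_nonneg (abs_nonneg a),
    smul_eq_mul, strategyNorm]

lemma strategyNorm_add_le (hK : IsCompact K) {T : Matrix ι ι ℂ} (hT : T.PosSemidef) (hTK : T ∈ K)
    (X Y : Matrix ι ι ℂ) : strategyNorm K (X + Y) ≤ strategyNorm K X + strategyNorm K Y := by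
  have hne := strategyBiases_nonempty K hT hTK
  have hbdd := bddAbove_strategyBiases K hK
  rw [strategyNorm, strategyNorm, strategyNorm, ← csSup_add (hne X) (hbdd X) (hne Y) (hbdd Y)]
  exact csSup_le_csSup ((hbdd X).add (hbdd Y)) (hne _) (strategyBiases_add_subset K X Y)

variable [DecidableEq ι]

open scoped MatrixOrder in
lemma mul_sum_abs_eigenvalues_mem_strategyBiases {X : Matrix ι ι ℂ} (hX : X.IsHermitian)
    {c : ℝ} (hc : 0 ≤ c) (hcK : c • (1 : Matrix ι ι ℂ) ∈ K) :
    c * ∑ i, |hX.eigenvalues i| ∈ strategyBiases K X := by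
  set f₀ : ℝ → ℝ := fun x => if 0 < x then c else 0
  set f₁ : ℝ → ℝ := fun x => if 0 < x then 0 else c
  have hcont := hX.continuousOn_spectrum
  have hsum : cfc f₀ X + cfc f₁ X = c • 1 := by
    rw [← cfc_add (a := X) f₀ f₁ (hcont _) (hcont _), ← Algebra.algebraMap_eq_smul_one,
      ← cfc_const c X]
    congr 1
    funext x
    by_cases hx : 0 < x <;> simp [f₀, f₁, hx]
  have hdiff : (cfc f₀ X - cfc f₁ X) * X = cfc (fun x => c * |x|) X := by
    rw [← cfc_sub f₀ f₁ X (hcont _) (hcont _)]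
    conv_lhs => rhs; rw [← cfc_id' ℝ X]
    rw [← cfc_mul _ _ X (hcont _) (hcont _)]
    congr 1
    funext x
    rcases lt_or_ge 0 x with hx | hx
    · simp [f₀, f₁, hx, abs_of_pos hx]
    · simp [f₀, f₁, hx.not_gt, abs_of_nonpos hx]
  refine ⟨cfc f₀ X, cfc f₁ X, ?_, ?_, hsum ▸ hcK, ?_⟩
  · exact nonneg_iff_posSemidef.mp (cfc_nonneg fun x _ => by positivity)
  · exact nonneg_iff_posSemidef.mp (cfc_nonneg fun x _ => by positivity)
  · rw [hdiff, hX.trace_cfc, Complex.re_sum, Finset.mul_sum]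
    simp

lemma mul_sum_abs_eigenvalues_le_strategyNorm (hK : IsCompact K) {X : Matrix ι ι ℂ}
    (hX : X.IsHermitian) {c : ℝ} (hc : 0 ≤ c) (hcK : c • (1 : Matrix ι ι ℂ) ∈ K) :
    c * ∑ i, |hX.eigenvalues i| ≤ strategyNorm K X :=
  le_csSup (bddAbove_strategyBiases K hK X)
    (mul_sum_abs_eigenvalues_mem_strategyBiases K hX hc hcK)

lemma eq_zero_of_strategyNorm_eq_zero (hK : IsCompact K) {X : Matrix ι ι ℂ}
    (hX : X.IsHermitian) {c : ℝ} (hc : 0 < c) (hcK : c • (1 : Matrix ι ι ℂ) ∈ K)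
    (h : strategyNorm K X = 0) : X = 0 := by
  have hle := mul_sum_abs_eigenvalues_le_strategyNorm K hK hX hc.le hcK
  rw [h] at hle
  have hsum : ∑ i, |hX.eigenvalues i| = 0 :=
    le_antisymm (nonpos_of_mul_nonpos_right hle hc) (by positivity)
  rw [← hX.eigenvalues_eq_zero_iff]
  funext i
  exact abs_eq_zero.mp ((Finset.sum_eq_zero_iff_of_nonneg fun _ _ => abs_nonneg _).mp hsum i
    (Finset.mem_univ i))

end StrategyNorm

theorem stmt15_general {n : ℕ} (hn : 0 < n) (K : Set (Matrix (Fin n) (Fin n) ℂ))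
    (hKcpt : IsCompact K)
    (hKI : ((1 / (n : ℝ)) • (1 : Matrix (Fin n) (Fin n) ℂ)) ∈ K)
    (N : Matrix (Fin n) (Fin n) ℂ → ℝ)
    (hN : ∀ X, N X = sSup {r : ℝ | ∃ T₀ T₁ : Matrix (Fin n) (Fin n) ℂ,
        T₀.PosSemidef ∧ T₁.PosSemidef ∧ T₀ + T₁ ∈ K ∧
        r = (((T₀ - T₁) * X).trace).re}) :
    (∀ X Y : Matrix (Fin n) (Fin n) ℂ, X.IsHermitian → Y.IsHermitian →
        N (X + Y) ≤ N X + N Y) ∧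
    (∀ (a : ℝ) (X : Matrix (Fin n) (Fin n) ℂ), X.IsHermitian →
        N ((a : ℂ) • X) = |a| * N X) ∧
    (∀ X : Matrix (Fin n) (Fin n) ℂ, X.IsHermitian →
        (1 / (n : ℝ)) * traceNorm X ≤ N X) ∧
    (∀ X : Matrix (Fin n) (Fin n) ℂ, X.IsHermitian → N X = 0 → X = 0) := by
  obtain rfl : N = strategyNorm K := funext hN
  have hc : (0 : ℝ) < 1 / n := by positivity
  have hI : ((1 / (n : ℝ)) • (1 : Matrix (Fin n) (Fin n) ℂ)).PosSemidef :=
    PosSemidef.one.smul hc.le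
  refine ⟨fun X Y _ _ => strategyNorm_add_le K hKcpt hI hKI X Y,
    fun a X _ => strategyNorm_real_smul K a X, fun X hX => ?_,
    fun X hX => eq_zero_of_strategyNorm_eq_zero K hKcpt hX hc hKI⟩
  rw [hX.traceNorm_eq_sum_abs_eigenvalues]
  exact mul_sum_abs_eigenvalues_le_strategyNorm K hKcpt hX hc.le hKI

/-- `N(X) = max{⟨T₀ - T₁, X⟩ : T₀, T₁ ⪰ 0, T₀ + T₁ ∈ K}` where `K` is a nonempty compact
convex set of positive semidefinite operators containing `(1/dim)·I`.  Then `N` satisfies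
the triangle inequality, is absolutely homogeneous, and `N(X) ≥ (1/dim)·‖X‖₁` on Hermitian
operators; in particular `N` is a norm. -/
theorem stmt15 {n : ℕ} (hn : 0 < n) (K : Set (Matrix (Fin n) (Fin n) ℂ))
    (hKne : K.Nonempty) (hKcpt : IsCompact K) (hKconv : Convex ℝ K)
    (hKpsd : ∀ T ∈ K, T.PosSemidef)
    (hKI : ((1 / (n : ℝ)) • (1 : Matrix (Fin n) (Fin n) ℂ)) ∈ K)
    (N : Matrix (Fin n) (Fin n) ℂ → ℝ)
    (hN : ∀ X, N X = sSup {r : ℝ | ∃ T₀ T₁ : Matrix (Fin n) (Fin n) ℂ,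
        T₀.PosSemidef ∧ T₁.PosSemidef ∧ T₀ + T₁ ∈ K ∧
        r = (((T₀ - T₁) * X).trace).re}) :
    (∀ X Y : Matrix (Fin n) (Fin n) ℂ, X.IsHermitian → Y.IsHermitian →
        N (X + Y) ≤ N X + N Y) ∧
    (∀ (a : ℝ) (X : Matrix (Fin n) (Fin n) ℂ), X.IsHermitian →
        N ((a : ℂ) • X) = |a| * N X) ∧
    (∀ X : Matrix (Fin n) (Fin n) ℂ, X.IsHermitian →
        (1 / (n : ℝ)) * traceNorm X ≤ N X) ∧
    (∀ X : Matrix (Fin n) (Fin n) ℂ, X.IsHermitian → N X = 0 → X = 0) :=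
  stmt15_general hn K hKcpt hKI N hN
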